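/- Let u be a Schwartz function on R and f ∈ A^p(T), 1 ≤ p < ∞, considered as a 1-periodic tempered distribution on R. Define ⦀u⦀ := 10·sup_{x∈R} (1+x²)|û(x)|. Then the product u·f belongs to A^p(R) and ‖u·f‖_{A^p(R)} ≤ ⦀u⦀ · ‖f‖_{A^p(T)}. -/

import Mathlib

/-!
Write `Wₙ(x) = |û(x - n)|`. Since `|û(y)| ≤ C (1 + y²)⁻¹` with `C = sup (1 + y²)|û(y)|`, the rows
satisfy `∑ₙ Wₙ(x) ≤ C ∑ₙ (1 + (x - n)²)⁻¹ ≤ 10 C = ⦀u⦀` and the columns `∫ Wₙ ≤ π C ≤ ⦀u⦀`.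
Hölder's inequality with weights `Wₙ(x)` gives
`(∑ₙ |bₙ| Wₙ(x))^p ≤ (∑ₙ Wₙ(x))^(p-1) ∑ₙ |bₙ|^p Wₙ(x)`, and integrating in `x` (a Schur test)
yields `‖∑ₙ bₙ Wₙ‖_p ≤ ⦀u⦀ ‖b‖_p`.
-/

open MeasureTheory

/-- The Fourier transform on `ℝ`, `û(x) = ∫ u(t) e^{-2πixt} dt`. -/
noncomputable def ftR (u : ℝ → ℂ) (x : ℝ) : ℂ :=
  ∫ t : ℝ, u t * Complex.exp ((-2) * (Real.pi : ℂ) * Complex.I * (x : ℂ) * (t : ℂ))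

/-- The auxiliary norm `⦀u⦀ = 10 · sup_x (1+x²)|û(x)|` on the Schwartz space. -/
noncomputable def nmb (u : SchwartzMap ℝ ℂ) : ℝ :=
  10 * ⨆ x : ℝ, (1 + x ^ 2) * ‖ftR (⇑u) x‖

open scoped ENNReal FourierTransform

lemma ENNReal.inner_le_weight_mul_Lp_tsum {ι : Type*} {p : ℝ} (hp : 1 ≤ p) (w f : ι → ℝ≥0∞) :
    ∑' i, w i * f i ≤ (∑' i, w i) ^ (1 - p⁻¹) * (∑' i, w i * f i ^ p) ^ p⁻¹ := by
  rw [ENNReal.tsum_eq_iSup_sum]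
  refine iSup_le fun s => (ENNReal.inner_le_weight_mul_Lp_of_nonneg s hp w f).trans ?_
  have : 0 ≤ 1 - p⁻¹ := sub_nonneg.2 (inv_le_one_of_one_le₀ hp)
  gcongr <;> exact ENNReal.sum_le_tsum s

lemma ENNReal.rpow_tsum_mul_le {ι : Type*} {p : ℝ} (hp : 1 ≤ p) (a w : ι → ℝ≥0∞) :
    (∑' i, a i * w i) ^ p ≤ (∑' i, w i) ^ (p - 1) * ∑' i, a i ^ p * w i := by
  have hp0 : 0 < p := zero_lt_one.trans_le hp
  simp_rw [mul_comm (a _) (w _), mul_comm (a _ ^ p) (w _)]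
  calc (∑' i, w i * a i) ^ p
      ≤ ((∑' i, w i) ^ (1 - p⁻¹) * (∑' i, w i * a i ^ p) ^ p⁻¹) ^ p := by
        gcongr
        exact ENNReal.inner_le_weight_mul_Lp_tsum hp w a
    _ = (∑' i, w i) ^ (p - 1) * ∑' i, w i * a i ^ p := by
        rw [ENNReal.mul_rpow_of_nonneg _ _ hp0.le, ← ENNReal.rpow_mul, ← ENNReal.rpow_mul,
          sub_mul, one_mul, inv_mul_cancel₀ hp0.ne', ENNReal.rpow_one]

section SchurTest

variable {α ι : Type*} [MeasurableSpace α] {μ : Measure α} [Countable ι]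
  {W : ι → α → ℝ≥0∞} {M : ℝ≥0∞}

theorem lintegral_rpow_tsum_mul_le {p : ℝ} (hp : 1 ≤ p) (hW : ∀ i, AEMeasurable (W i) μ)
    (hrow : ∀ x, ∑' i, W i x ≤ M) (hcol : ∀ i, ∫⁻ x, W i x ∂μ ≤ M) (a : ι → ℝ≥0∞) :
    ∫⁻ x, (∑' i, a i * W i x) ^ p ∂μ ≤ M ^ p * ∑' i, a i ^ p := by
  have hp1 : 0 ≤ p - 1 := sub_nonneg.2 hp
  calc ∫⁻ x, (∑' i, a i * W i x) ^ p ∂μ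
      ≤ ∫⁻ x, M ^ (p - 1) * ∑' i, a i ^ p * W i x ∂μ := by
        refine lintegral_mono fun x => (ENNReal.rpow_tsum_mul_le hp a (W · x)).trans ?_
        gcongr
        exact hrow x
    _ = M ^ (p - 1) * ∑' i, a i ^ p * ∫⁻ x, W i x ∂μ := by
        rw [lintegral_const_mul'' _ (AEMeasurable.tsum fun i => (hW i).const_mul _),
          lintegral_tsum fun i => (hW i).const_mul _]
        simp_rw [lintegral_const_mul'' _ (hW _)]
    _ ≤ M ^ (p - 1) * ∑' i, a i ^ p * M := by gcongr with i; exact hcol i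
    _ = M ^ (p - 1) * M ^ (1 : ℝ) * ∑' i, a i ^ p := by
        rw [ENNReal.rpow_one, ENNReal.tsum_mul_right]
        ring
    _ = M ^ p * ∑' i, a i ^ p := by
        rw [← ENNReal.rpow_add_of_nonneg _ _ hp1 zero_le_one, sub_add_cancel]

theorem eLpNorm_tsum_le_of_enorm_le {E : Type*} [NormedAddCommGroup E] {p : ℝ} (hp : 1 ≤ p)
    (hW : ∀ i, AEMeasurable (W i) μ) (hrow : ∀ x, ∑' i, W i x ≤ M)
    (hcol : ∀ i, ∫⁻ x, W i x ∂μ ≤ M) {f : ι → α → E} (a : ι → ℝ≥0∞)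
    (hf : ∀ i x, ‖f i x‖ₑ ≤ a i * W i x) :
    eLpNorm (fun x => ∑' i, f i x) (ENNReal.ofReal p) μ ≤ M * (∑' i, a i ^ p) ^ p⁻¹ := by
  have hp0 : 0 < p := zero_lt_one.trans_le hp
  rw [eLpNorm_eq_lintegral_rpow_enorm_toReal (by simpa using hp0) ENNReal.ofReal_ne_top,
    ENNReal.toReal_ofReal hp0.le, one_div]
  calc (∫⁻ x, ‖∑' i, f i x‖ₑ ^ p ∂μ) ^ p⁻¹
      ≤ (∫⁻ x, (∑' i, a i * W i x) ^ p ∂μ) ^ p⁻¹ := by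
        gcongr with x
        exact enorm_tsum_le_tsum_enorm.trans (ENNReal.tsum_le_tsum fun i => hf i x)
    _ ≤ (M ^ p * ∑' i, a i ^ p) ^ p⁻¹ := by
        gcongr
        exact lintegral_rpow_tsum_mul_le hp hW hrow hcol a
    _ = M * (∑' i, a i ^ p) ^ p⁻¹ := by
        rw [ENNReal.mul_rpow_of_nonneg _ _ (inv_nonneg.2 hp0.le), ← ENNReal.rpow_mul,
          mul_inv_cancel₀ hp0.ne', ENNReal.rpow_one]

end SchurTest

lemma inv_one_add_sq_sub_le {y : ℝ} (hy : |y| ≤ 1 / 2) (t : ℝ) :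
    (1 + (y - t) ^ 2)⁻¹ ≤ 2 * (1 + t ^ 2)⁻¹ := by
  rw [← div_eq_mul_inv, le_div_iff₀ (by positivity), inv_mul_le_iff₀ (by positivity)]
  have hy2 : y ^ 2 ≤ 1 / 4 := by nlinarith [sq_abs y, abs_nonneg y]
  nlinarith [sq_nonneg (t - 2 * y)]

lemma tsum_ofReal_inv_one_add_sq_nat_succ_le :
    ∑' n : ℕ, ENNReal.ofReal (1 + ((n : ℝ) + 1) ^ 2)⁻¹ ≤ ENNReal.ofReal (Real.pi ^ 2 / 6) := by
  calc ∑' n : ℕ, ENNReal.ofReal (1 + ((n : ℝ) + 1) ^ 2)⁻¹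
      ≤ ∑' n : ℕ, ENNReal.ofReal (1 / ((n + 1 : ℕ) : ℝ) ^ 2) := by
        gcongr with n
        push_cast
        rw [one_div]
        gcongr
        linarith
    _ ≤ ∑' m : ℕ, ENNReal.ofReal (1 / (m : ℝ) ^ 2) :=
        ENNReal.tsum_comp_le_tsum_of_injective Nat.succ_injective _
    _ = ENNReal.ofReal (Real.pi ^ 2 / 6) := by
        rw [← ENNReal.ofReal_tsum_of_nonneg (fun _ => by positivity) hasSum_zeta_two.summable,
          hasSum_zeta_two.tsum_eq]

lemma tsum_ofReal_inv_one_add_sq_int_le :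
    ∑' k : ℤ, ENNReal.ofReal (1 + (k : ℝ) ^ 2)⁻¹ ≤ 5 := by
  rw [tsum_of_add_one_of_neg_add_one ENNReal.summable ENNReal.summable]
  have hneg : ∀ n : ℕ, ((-(n + 1 : ℤ) : ℤ) : ℝ) ^ 2 = ((n : ℝ) + 1) ^ 2 := fun n => by
    push_cast; ring
  simp only [hneg, Int.cast_add, Int.cast_natCast, Int.cast_one, Int.cast_zero]
  calc _ ≤ ENNReal.ofReal (Real.pi ^ 2 / 6) + 1 + ENNReal.ofReal (Real.pi ^ 2 / 6) := by
        gcongr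
        · exact tsum_ofReal_inv_one_add_sq_nat_succ_le
        · norm_num
        · exact tsum_ofReal_inv_one_add_sq_nat_succ_le
    _ ≤ 5 := by
        rw [← ENNReal.ofReal_one, ← ENNReal.ofReal_add (by positivity) zero_le_one,
          ← ENNReal.ofReal_add (by positivity) (by positivity), ← ENNReal.ofReal_ofNat 5]
        apply ENNReal.ofReal_le_ofReal
        nlinarith [Real.pi_lt_d2, Real.pi_pos]

lemma tsum_ofReal_inv_one_add_sq_sub_int_le (x : ℝ) :
    ∑' n : ℤ, ENNReal.ofReal (1 + (x - n) ^ 2)⁻¹ ≤ 10 := by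
  have hy : |x - round x| ≤ 1 / 2 := abs_sub_round x
  calc ∑' n : ℤ, ENNReal.ofReal (1 + (x - n) ^ 2)⁻¹
      = ∑' k : ℤ, ENNReal.ofReal (1 + (x - round x - k) ^ 2)⁻¹ := by
        rw [← (Equiv.addLeft (round x)).tsum_eq]
        simp [sub_sub]
    _ ≤ ∑' k : ℤ, 2 * ENNReal.ofReal (1 + (k : ℝ) ^ 2)⁻¹ := by
        gcongr with k
        rw [← ENNReal.ofReal_ofNat 2, ← ENNReal.ofReal_mul zero_le_two]
        exact ENNReal.ofReal_le_ofReal (inv_one_add_sq_sub_le hy k)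
    _ ≤ 2 * 5 := by
        rw [ENNReal.tsum_mul_left]
        gcongr
        exact tsum_ofReal_inv_one_add_sq_int_le
    _ = 10 := by norm_num

namespace SchwartzMap

variable (u : SchwartzMap ℝ ℂ)

lemma ftR_eq_fourier : ftR u = ⇑(𝓕 u : SchwartzMap ℝ ℂ) := by
  funext x
  rw [SchwartzMap.fourier_coe, Real.fourier_real_eq_integral_exp_smul]
  unfold ftR
  congr 1
  funext t
  rw [smul_eq_mul, mul_comm]
  congr 2
  push_cast
  ring

lemma continuous_ftR : Continuous (ftR u) := by
  rw [ftR_eq_fourier]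
  exact (𝓕 u : SchwartzMap ℝ ℂ).continuous

lemma bddAbove_one_add_sq_mul_norm_ftR :
    BddAbove (Set.range fun x : ℝ => (1 + x ^ 2) * ‖ftR u x‖) := by
  obtain ⟨C₀, -, h₀⟩ := (𝓕 u : SchwartzMap ℝ ℂ).decay 0 0
  obtain ⟨C₂, -, h₂⟩ := (𝓕 u : SchwartzMap ℝ ℂ).decay 2 0
  refine ⟨C₀ + C₂, Set.forall_mem_range.2 fun x => ?_⟩
  specialize h₀ x
  specialize h₂ x
  simp only [norm_iteratedFDeriv_zero, pow_zero, one_mul, Real.norm_eq_abs, sq_abs] at h₀ h₂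
  rw [ftR_eq_fourier, add_mul, one_mul]
  exact add_le_add h₀ h₂

lemma nmb_nonneg : 0 ≤ nmb u :=
  mul_nonneg (by norm_num) (Real.iSup_nonneg fun _ => by positivity)

lemma norm_ftR_le (y : ℝ) : ‖ftR u y‖ ≤ nmb u / 10 * (1 + y ^ 2)⁻¹ := by
  rw [nmb, mul_div_cancel_left₀ _ (by norm_num), ← div_eq_mul_inv,
    le_div_iff₀ (by positivity), mul_comm]
  exact le_ciSup (bddAbove_one_add_sq_mul_norm_ftR u) y

lemma tsum_enorm_ftR_sub_int_le (x : ℝ) :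
    ∑' n : ℤ, ‖ftR u (x - n)‖ₑ ≤ ENNReal.ofReal (nmb u) := by
  calc ∑' n : ℤ, ‖ftR u (x - n)‖ₑ
      ≤ ∑' n : ℤ, ENNReal.ofReal (nmb u / 10) * ENNReal.ofReal (1 + (x - n) ^ 2)⁻¹ := by
        gcongr with n
        rw [← ofReal_norm, ← ENNReal.ofReal_mul (by linarith [nmb_nonneg u])]
        exact ENNReal.ofReal_le_ofReal (norm_ftR_le u _)
    _ ≤ ENNReal.ofReal (nmb u / 10) * 10 := by
        rw [ENNReal.tsum_mul_left]
        gcongr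
        exact tsum_ofReal_inv_one_add_sq_sub_int_le x
    _ = ENNReal.ofReal (nmb u) := by
        rw [← ENNReal.ofReal_ofNat 10, ← ENNReal.ofReal_mul (by linarith [nmb_nonneg u])]
        ring_nf

lemma lintegral_enorm_ftR_le : ∫⁻ x, ‖ftR u x‖ₑ ≤ ENNReal.ofReal (nmb u) := by
  have hC : 0 ≤ nmb u / 10 := by linarith [nmb_nonneg u]
  calc ∫⁻ x, ‖ftR u x‖ₑ
      ≤ ∫⁻ x, ENNReal.ofReal (nmb u / 10 * (1 + x ^ 2)⁻¹) := by
        gcongr with x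
        rw [← ofReal_norm]
        exact ENNReal.ofReal_le_ofReal (norm_ftR_le u x)
    _ = ENNReal.ofReal (nmb u / 10 * Real.pi) := by
        rw [← ofReal_integral_eq_lintegral_ofReal (integrable_inv_one_add_sq.const_mul _)
          (Filter.Eventually.of_forall fun x => by positivity),
          integral_const_mul, integral_univ_inv_one_add_sq]
    _ ≤ ENNReal.ofReal (nmb u) := by
        gcongr
        nlinarith [Real.pi_le_four, nmb_nonneg u]

end SchwartzMap

/-- For a Schwartz function `u` and `f ∈ A^p(𝕋)` with Fourier coefficients `b ∈ ℓ^p(ℤ)`,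
the product `u·f` lies in `A^p(ℝ)`: its Fourier transform `x ↦ ∑_n b(n) û(x-n)` is in
`L^p(ℝ)` with norm at most `⦀u⦀ · ‖f‖_{A^p(𝕋)}`. -/
theorem stmt4 (p : ℝ) (hp : 1 ≤ p) (u : SchwartzMap ℝ ℂ)
    (b : ℤ → ℂ) (hb : Summable (fun n => ‖b n‖ ^ p)) :
    MemLp (fun x : ℝ => ∑' n : ℤ, b n * ftR (⇑u) (x - n)) (ENNReal.ofReal p)
      (volume : Measure ℝ) ∧
    eLpNorm (fun x : ℝ => ∑' n : ℤ, b n * ftR (⇑u) (x - n)) (ENNReal.ofReal p)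
        (volume : Measure ℝ)
      ≤ ENNReal.ofReal (nmb u * (∑' n : ℤ, ‖b n‖ ^ p) ^ (1/p)) := by
  have hp0 : 0 < p := zero_lt_one.trans_le hp
  have hshift (n : ℤ) : Continuous fun x : ℝ => ftR u (x - n) :=
    u.continuous_ftR.comp (continuous_sub_right _)
  have hcol (n : ℤ) : ∫⁻ x, ‖ftR u (x - n)‖ₑ ≤ ENNReal.ofReal (nmb u) :=
    (lintegral_sub_right_eq_self (fun x => ‖ftR u x‖ₑ) (n : ℝ)).trans_le
      u.lintegral_enorm_ftR_le
  have hrhs : ENNReal.ofReal (nmb u * (∑' n : ℤ, ‖b n‖ ^ p) ^ (1/p))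
      = ENNReal.ofReal (nmb u) * (∑' n : ℤ, ‖b n‖ₑ ^ p) ^ p⁻¹ := by
    rw [ENNReal.ofReal_mul u.nmb_nonneg, one_div,
      ← ENNReal.ofReal_rpow_of_nonneg (by positivity) (by positivity),
      ENNReal.ofReal_tsum_of_nonneg (fun n => by positivity) hb]
    simp_rw [← ofReal_norm, ENNReal.ofReal_rpow_of_nonneg (norm_nonneg _) hp0.le]
  have hle := hrhs ▸ eLpNorm_tsum_le_of_enorm_le hp (fun n => (hshift n).enorm.aemeasurable)
    u.tsum_enorm_ftR_sub_int_le hcol (fun n => ‖b n‖ₑ) (fun n x => (enorm_mul _ _).le)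
  have hmeas : AEStronglyMeasurable (fun x : ℝ => ∑' n : ℤ, b n * ftR u (x - n)) :=
    AEStronglyMeasurable.tsum fun n => (continuous_const.mul (hshift n)).aestronglyMeasurable
  exact ⟨⟨hmeas, hle.trans_lt ENNReal.ofReal_lt_top⟩, hle⟩
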